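/- arXiv:math/0703807 — 2 statements merged into one kernel-verified Lean document; each statement's English description precedes it below -/
import Mathlib

section
/- For every bounded set A ⊆ ℝ^{n-1} (n ≥ 2) and every R > 0, the tube-measure of A × [−R, R] ⊆ ℝⁿ satisfies μ(A × [−R, R]) ≥ 2R·|A| / (2R + diam(A)), where |A| is the (n−1)-dimensional Lebesgue outer measure of A. -/
open MeasureTheory Metric Set

noncomputable def unitBallVolume (k : ℕ) : ENNReal :=
  volume (Metric.closedBall (0 : EuclideanSpace ℝ (Fin k)) 1)

def IsTube {n : ℕ} (T : Set (EuclideanSpace ℝ (Fin n))) (r : ℝ) : Prop :=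
  0 < r ∧ ∃ p v : EuclideanSpace ℝ (Fin n), v ≠ 0 ∧
    T = Metric.cthickening r {x | ∃ t : ℝ, x = p + t • v}

noncomputable def tubeMeasure (n : ℕ) (E : Set (EuclideanSpace ℝ (Fin n))) : ENNReal :=
  ⨅ (T : ℕ → Set (EuclideanSpace ℝ (Fin n))) (r : ℕ → ℝ)
    (_ : ∀ i, IsTube (T i) (r i)) (_ : E ⊆ ⋃ i, T i),
    ∑' i, unitBallVolume (n - 1) * ENNReal.ofReal (r i ^ (n - 1))


/-- Identification of `ℝ^m × ℝ` with `ℝ^(m+1)`: the set `A × [-R, R]`. -/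
def prodWithIcc {m : ℕ} (A : Set (EuclideanSpace ℝ (Fin m))) (R : ℝ) :
    Set (EuclideanSpace ℝ (Fin (m + 1))) :=
  {x | (WithLp.toLp 2 (fun i : Fin m => x i.castSucc) : EuclideanSpace ℝ (Fin m)) ∈ A ∧
    x (Fin.last m) ∈ Set.Icc (-R) R}

/-! A tube `T` of radius `r` whose axis has been rotated onto the last coordinate axis lies over
an `r`-ball of `ℝ^m`, so its intersection with a set `S` sits in a cylinder over that ball of
height at most `diam S`: `|T ∩ S| ≤ γ_m r^m diam S`. Summing over a cover of `S` by tubes gives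
`|S| ≤ μ(S) diam S`, and for `S = A × [-R, R]` we have `|S| = 2R|A|`, `diam S ≤ 2R + diam A`. -/

theorem cthickening_subset_preimage_closedBall {α β : Type*} [PseudoEMetricSpace α]
    [PseudoMetricSpace β] {g : α → β} (hg : LipschitzWith 1 g) {s : Set α} {c : β}
    (hs : ∀ x ∈ s, g x = c) {r : ℝ} (hr : 0 ≤ r) :
    cthickening r s ⊆ g ⁻¹' closedBall c r := by
  intro x hx
  rw [mem_preimage, mem_closedBall, ← edist_le_ofReal hr]
  refine le_trans (le_infEDist.2 fun y hy => ?_) (mem_cthickening_iff.1 hx)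
  simpa [hs y hy] using hg x y

section

variable {m : ℕ}

def euclideanInit : EuclideanSpace ℝ (Fin (m + 1)) →ₗ[ℝ] EuclideanSpace ℝ (Fin m) where
  toFun x := WithLp.toLp 2 (fun i : Fin m => x i.castSucc)
  map_add' _ _ := rfl
  map_smul' _ _ := rfl

@[simp]
theorem euclideanInit_apply (x : EuclideanSpace ℝ (Fin (m + 1))) (i : Fin m) :
    euclideanInit x i = x i.castSucc :=
  rfl

theorem dist_sq_eq_dist_euclideanInit_sq_add (x y : EuclideanSpace ℝ (Fin (m + 1))) :
    dist x y ^ 2 = dist (euclideanInit x) (euclideanInit y) ^ 2 +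
      dist (x (Fin.last m)) (y (Fin.last m)) ^ 2 := by
  rw [EuclideanSpace.dist_eq, EuclideanSpace.dist_eq, Real.sq_sqrt (by positivity),
    Real.sq_sqrt (by positivity), Fin.sum_univ_castSucc]
  rfl

theorem lipschitzWith_euclideanInit :
    LipschitzWith 1 (euclideanInit : EuclideanSpace ℝ (Fin (m + 1)) → _) :=
  .mk_one fun x y => (pow_le_pow_iff_left₀ dist_nonneg dist_nonneg two_ne_zero).1 <| by
    rw [dist_sq_eq_dist_euclideanInit_sq_add x y]
    exact le_add_of_nonneg_right (sq_nonneg _)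

theorem lipschitzWith_apply_last :
    LipschitzWith 1 fun x : EuclideanSpace ℝ (Fin (m + 1)) => x (Fin.last m) :=
  .mk_one fun x y => (pow_le_pow_iff_left₀ dist_nonneg dist_nonneg two_ne_zero).1 <| by
    rw [dist_sq_eq_dist_euclideanInit_sq_add x y]
    exact le_add_of_nonneg_left (sq_nonneg _)

theorem dist_le_dist_euclideanInit_add (x y : EuclideanSpace ℝ (Fin (m + 1))) :
    dist x y ≤
      dist (euclideanInit x) (euclideanInit y) + dist (x (Fin.last m)) (y (Fin.last m)) :=
  (pow_le_pow_iff_left₀ dist_nonneg (by positivity) two_ne_zero).1 <| by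
    rw [dist_sq_eq_dist_euclideanInit_sq_add x y]
    nlinarith [mul_nonneg (dist_nonneg (x := euclideanInit x) (y := euclideanInit y))
      (dist_nonneg (x := x (Fin.last m)) (y := y (Fin.last m)))]

theorem volume_setOf_euclideanInit_mem_and_last_mem (B : Set (EuclideanSpace ℝ (Fin m)))
    (I : Set ℝ) :
    volume {x : EuclideanSpace ℝ (Fin (m + 1)) | euclideanInit x ∈ B ∧ x (Fin.last m) ∈ I} =
      volume B * volume I := by
  let e := ((MeasurableEquiv.toLp 2 (Fin (m + 1) → ℝ)).symm.trans
    (MeasurableEquiv.piFinSuccAbove (fun _ ↦ ℝ) (Fin.last m))).trans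
    ((MeasurableEquiv.refl ℝ).prodCongr (MeasurableEquiv.toLp 2 (Fin m → ℝ)))
  have he : MeasurePreserving e volume volume :=
    ((MeasurePreserving.id volume).prod
      (EuclideanSpace.volume_preserving_symm_measurableEquiv_toLp (Fin m)).symm).comp
    ((volume_preserving_piFinSuccAbove (fun _ ↦ ℝ) (Fin.last m)).comp
      (EuclideanSpace.volume_preserving_symm_measurableEquiv_toLp (Fin (m + 1))))
  have he_apply (x : EuclideanSpace ℝ (Fin (m + 1))) :
      e x = (x (Fin.last m), euclideanInit x) := by
    ext <;> simp [e, MeasurableEquiv.prodCongr, Fin.init]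
  have hset : {x : EuclideanSpace ℝ (Fin (m + 1)) | euclideanInit x ∈ B ∧ x (Fin.last m) ∈ I}
      = e ⁻¹' (I ×ˢ B) := by
    ext x
    simp [he_apply, and_comm]
  rw [hset, he.measure_preimage_equiv, Measure.volume_eq_prod, Measure.prod_prod, mul_comm]

theorem volume_closedBall_eq_unitBallVolume_mul (x : EuclideanSpace ℝ (Fin m)) {r : ℝ}
    (hr : 0 ≤ r) : volume (closedBall x r) = unitBallVolume m * ENNReal.ofReal (r ^ m) := by
  rw [Measure.addHaar_closedBall' _ _ hr, finrank_euclideanSpace_fin, mul_comm, unitBallVolume]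

theorem exists_linearIsometryEquiv_euclideanInit_eq_zero (v : EuclideanSpace ℝ (Fin (m + 1))) :
    ∃ f : EuclideanSpace ℝ (Fin (m + 1)) ≃ₗᵢ[ℝ] EuclideanSpace ℝ (Fin (m + 1)),
      euclideanInit (f v) = 0 := by
  set w : EuclideanSpace ℝ (Fin (m + 1)) := ‖v‖ • EuclideanSpace.single (Fin.last m) 1
  -- the Householder reflection exchanging `v` and `w`
  refine ⟨(ℝ ∙ (v - w))ᗮ.reflection, ?_⟩
  rw [Submodule.reflection_sub (by simp [w, norm_smul])]
  ext i
  simp [w, (Fin.castSucc_lt_last i).ne]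

theorem volume_inter_le_of_isTube {T : Set (EuclideanSpace ℝ (Fin (m + 1)))} {r : ℝ}
    (hT : IsTube T r) (S : Set (EuclideanSpace ℝ (Fin (m + 1)))) :
    volume (T ∩ S) ≤ unitBallVolume m * ENNReal.ofReal (r ^ m) * ediam S := by
  obtain ⟨hr, p, v, -, rfl⟩ := hT
  obtain ⟨f, hfv⟩ := exists_linearIsometryEquiv_euclideanInit_eq_zero v
  set T := cthickening r {x | ∃ t : ℝ, x = p + t • v}
  set I : Set ℝ := (fun w => w (Fin.last m)) '' (f '' (T ∩ S))
  have hT_cross : T ⊆ (fun x => euclideanInit (f x)) ⁻¹' closedBall (euclideanInit (f p)) r :=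
    cthickening_subset_preimage_closedBall
      ((lipschitzWith_euclideanInit.comp f.lipschitz).weaken (mul_one 1).le)
      (by rintro _ ⟨t, rfl⟩; simp [hfv]) hr.le
  let C := {w | euclideanInit w ∈ closedBall (euclideanInit (f p)) r ∧ w (Fin.last m) ∈ I}
  have hTS : T ∩ S ⊆ f ⁻¹' C := fun x hx => ⟨hT_cross hx.1, f x, ⟨x, hx, rfl⟩, rfl⟩
  have hI : volume I ≤ ediam S := calc
    volume I ≤ ediam I := Real.volume_le_diam I
    _ ≤ ediam (f '' (T ∩ S)) :=
      (lipschitzWith_apply_last.ediam_image_le _).trans_eq (one_mul _)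
    _ = ediam (T ∩ S) := f.ediam_image _
    _ ≤ ediam S := ediam_mono inter_subset_right
  calc volume (T ∩ S)
      ≤ volume (f ⁻¹' C) := measure_mono hTS
    _ = volume C :=
      MeasurePreserving.measure_preimage_equiv (f := f.toMeasurableEquiv) f.measurePreserving C
    _ = unitBallVolume m * ENNReal.ofReal (r ^ m) * volume I := by
      rw [volume_setOf_euclideanInit_mem_and_last_mem,
        volume_closedBall_eq_unitBallVolume_mul _ hr.le]
    _ ≤ unitBallVolume m * ENNReal.ofReal (r ^ m) * ediam S := by gcongr

theorem volume_div_ediam_le_tubeMeasure (S : Set (EuclideanSpace ℝ (Fin (m + 1)))) :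
    volume S / ediam S ≤ tubeMeasure (m + 1) S := by
  refine le_iInf₂ fun T r => le_iInf₂ fun hT hcov => ENNReal.div_le_of_le_mul ?_
  calc volume S = volume (⋃ i, T i ∩ S) := by rw [← iUnion_inter, inter_eq_right.2 hcov]
    _ ≤ ∑' i, volume (T i ∩ S) := measure_iUnion_le _
    _ ≤ ∑' i, unitBallVolume m * ENNReal.ofReal (r i ^ m) * ediam S :=
      ENNReal.tsum_le_tsum fun i => volume_inter_le_of_isTube (hT i) S
    _ = (∑' i, unitBallVolume (m + 1 - 1) * ENNReal.ofReal (r i ^ (m + 1 - 1))) * ediam S :=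
      ENNReal.tsum_mul_right

theorem volume_prodWithIcc (A : Set (EuclideanSpace ℝ (Fin m))) (R : ℝ) :
    volume (prodWithIcc A R) = volume A * ENNReal.ofReal (2 * R) :=
  (volume_setOf_euclideanInit_mem_and_last_mem A (Icc (-R) R)).trans <| by
    rw [Real.volume_Icc, sub_neg_eq_add, two_mul]

theorem ediam_prodWithIcc_le {A : Set (EuclideanSpace ℝ (Fin m))}
    (hA : Bornology.IsBounded A) (R : ℝ) :
    ediam (prodWithIcc A R) ≤ ENNReal.ofReal (2 * R + diam A) :=
  ediam_le fun x hx y hy => by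
    have hlast := Real.dist_le_of_mem_Icc hx.2 hy.2
    rw [edist_dist, add_comm (2 * R)]
    refine ENNReal.ofReal_le_ofReal ((dist_le_dist_euclideanInit_add x y).trans ?_)
    exact add_le_add (dist_le_diam_of_mem hA hx.1 hy.1) (by linarith)

end

theorem tubeMeasure_prod_Icc_ge_general (m : ℕ)
    (A : Set (EuclideanSpace ℝ (Fin m))) (hA : Bornology.IsBounded A)
    (R : ℝ) :
    ENNReal.ofReal (2 * R) * volume A / ENNReal.ofReal (2 * R + Metric.diam A) ≤
      tubeMeasure (m + 1) (prodWithIcc A R) := calc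
  _ = volume (prodWithIcc A R) / ENNReal.ofReal (2 * R + diam A) := by
    rw [volume_prodWithIcc, mul_comm]
  _ ≤ volume (prodWithIcc A R) / ediam (prodWithIcc A R) :=
    ENNReal.div_le_div_left (ediam_prodWithIcc_le hA R) _
  _ ≤ tubeMeasure (m + 1) (prodWithIcc A R) := volume_div_ediam_le_tubeMeasure _

/-- For bounded `A ⊆ ℝ^{n-1}` and `R > 0`,
`μ(A × [-R, R]) ≥ 2R·|A| / (2R + diam A)`. -/
theorem tubeMeasure_prod_Icc_ge (m : ℕ) (hm : 1 ≤ m)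
    (A : Set (EuclideanSpace ℝ (Fin m))) (hA : Bornology.IsBounded A)
    (R : ℝ) (hR : 0 < R) :
    ENNReal.ofReal (2 * R) * volume A / ENNReal.ofReal (2 * R + Metric.diam A) ≤
      tubeMeasure (m + 1) (prodWithIcc A R) :=
  tubeMeasure_prod_Icc_ge_general m A hA R
end

section
/- For every single tube T ⊆ ℝⁿ (n ≥ 2) of cross-sectional radius r > 0, the tube-measure of T is exactly its cross-sectional volume: μ(T) = γ_{n-1} · r^{n-1}. -/
/-!
Upper bound: an admissible cover is a sequence of tubes of positive radius, so cover `T` by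
itself followed by thinner coaxial tubes of radii `ρᵢ` with `∑ ρᵢ^(n-1) ≤ ε`.

Lower bound: in coordinates adapted to its axis, a tube of radius `ρ` is
`{y : ℝ × ℝⁿ⁻¹ | ‖y.2‖ ≤ ρ}`, so it meets a ball of radius `R` in volume at most
`2R · γ ρ^(n-1)`, while `T ∩ B(p, L + r)` contains the cylinder of length `2L` around the axis
point `p`. Covering `T ∩ B(p, L + r)` by the tubes `Tᵢ` of a cover gives
`2L · γ r^(n-1) ≤ 2(L + r) · ∑ γ rᵢ^(n-1)`, and letting `L → ∞` gives the claim.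
-/

open MeasureTheory Metric Set

open Module WithLp

theorem ENNReal.le_of_forall_natCast_mul_le {a b k : ENNReal} (hk : k ≠ ⊤)
    (h : ∀ n : ℕ, n * a ≤ (n + k) * b) : a ≤ b := by
  by_contra! hba
  obtain ⟨n, hn⟩ :=
    ENNReal.exists_nat_mul_gt (tsub_pos_of_lt hba).ne' (ENNReal.mul_ne_top hk hba.ne_top)
  have : (n : ENNReal) * (a - b) ≤ k * b := by
    rw [ENNReal.mul_sub fun _ _ => ENNReal.natCast_ne_top n, tsub_le_iff_left, ← add_mul]
    exact h n
  exact (hn.trans_le this).false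

theorem IsometryEquiv.preimage_cthickening {α β : Type*} [PseudoEMetricSpace α]
    [PseudoEMetricSpace β] (h : α ≃ᵢ β) (δ : ℝ) (s : Set β) :
    h ⁻¹' cthickening δ s = cthickening δ (h ⁻¹' s) := by
  ext x
  rw [mem_preimage, mem_cthickening_iff, mem_cthickening_iff,
    ← Metric.infEDist_image h.isometry, h.surjective.image_preimage]

theorem exists_linearIsometryEquiv_apply_eq {E F : Type*} [NormedAddCommGroup E]
    [InnerProductSpace ℝ E] [FiniteDimensional ℝ E] [NormedAddCommGroup F]
    [InnerProductSpace ℝ F] [FiniteDimensional ℝ F] (h : finrank ℝ E = finrank ℝ F)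
    {x : E} {y : F} (hxy : ‖x‖ = ‖y‖) : ∃ L : E ≃ₗᵢ[ℝ] F, L x = y := by
  let Φ : E ≃ₗᵢ[ℝ] F := (stdOrthonormalBasis ℝ E).repr.trans
    ((stdOrthonormalBasis ℝ F).reindex (finCongr h.symm)).repr.symm
  -- the reflection in the hyperplane orthogonal to `Φ x - y` swaps `Φ x` and `y`
  exact ⟨Φ.trans (Submodule.reflection (ℝ ∙ (Φ x - y))ᗮ),
    Submodule.reflection_sub (by rw [Φ.norm_map, hxy])⟩

theorem cthickening_setOf_snd_eq_zero {F : Type*} [NormedAddCommGroup F] {r : ℝ} (hr : 0 ≤ r) :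
    cthickening r {y : WithLp 2 (ℝ × F) | y.snd = 0} = {y | ‖y.snd‖ ≤ r} := by
  ext y
  constructor
  · intro hy
    have : ENNReal.ofReal ‖y.snd‖ ≤ infEDist y {y : WithLp 2 (ℝ × F) | y.snd = 0} := by
      refine Metric.le_infEDist.2 fun z (hz : z.snd = 0) => ?_
      calc ENNReal.ofReal ‖y.snd‖ = edist y.snd z.snd := by
            rw [hz, edist_zero_right, ofReal_norm]
        _ ≤ edist y z := edist_snd_le y z
    exact (ENNReal.ofReal_le_ofReal_iff hr).1 (this.trans (mem_cthickening_iff.1 hy))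
  · intro (hy : ‖y.snd‖ ≤ r)
    refine mem_cthickening_of_dist_le y (toLp 2 (y.fst, 0)) r _ rfl ?_
    rw [prod_dist_eq_of_L2]
    simpa [Real.sqrt_sq (norm_nonneg _)] using hy

section ProdL2

variable {F : Type*} [NormedAddCommGroup F] [InnerProductSpace ℝ F] [FiniteDimensional ℝ F]

theorem finrank_withLp_real_prod : finrank ℝ (WithLp 2 (ℝ × F)) = finrank ℝ F + 1 := by
  rw [(WithLp.linearEquiv 2 ℝ (ℝ × F)).finrank_eq, finrank_prod, finrank_self, add_comm]

variable [MeasurableSpace F] [BorelSpace F]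

theorem volume_setOf_fst_mem_and_snd_mem (s : Set ℝ) (t : Set F) :
    volume {y : WithLp 2 (ℝ × F) | y.fst ∈ s ∧ y.snd ∈ t} = volume s * volume t := by
  rw [← Measure.prod_prod, ← Measure.volume_eq_prod,
    ← (volume_preserving_symm_measurableEquiv_toLp_prod ℝ F).measure_preimage_equiv]
  rfl

theorem volume_setOf_norm_snd_le_inter_closedBall_le (ρ R : ℝ) (c : WithLp 2 (ℝ × F)) :
    volume ({y : WithLp 2 (ℝ × F) | ‖y.snd‖ ≤ ρ} ∩ closedBall c R)
      ≤ ENNReal.ofReal (2 * R) * volume (closedBall (0 : F) ρ) := by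
  have hsub : {y : WithLp 2 (ℝ × F) | ‖y.snd‖ ≤ ρ} ∩ closedBall c R ⊆
      {y | y.fst ∈ Icc (c.fst - R) (c.fst + R) ∧ y.snd ∈ closedBall 0 ρ} := by
    rintro y ⟨hy, hyc⟩
    have hfst : |y.fst - c.fst| ≤ R := (dist_fst_le y c).trans hyc
    obtain ⟨h₁, h₂⟩ := abs_le.1 hfst
    exact ⟨⟨by linarith, by linarith⟩, mem_closedBall_zero_iff.2 hy⟩
  refine (measure_mono hsub).trans_eq ?_
  rw [volume_setOf_fst_mem_and_snd_mem, Real.volume_Icc,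
    show c.fst + R - (c.fst - R) = 2 * R by ring]

theorem le_volume_setOf_norm_snd_le_inter_closedBall (r L : ℝ) :
    ENNReal.ofReal (2 * L) * volume (closedBall (0 : F) r)
      ≤ volume ({y : WithLp 2 (ℝ × F) | ‖y.snd‖ ≤ r} ∩ closedBall 0 (L + r)) := by
  have hsub : {y : WithLp 2 (ℝ × F) | y.fst ∈ Icc (-L) L ∧ y.snd ∈ closedBall 0 r} ⊆
      {y | ‖y.snd‖ ≤ r} ∩ closedBall 0 (L + r) := by
    rintro y ⟨hfst, hsnd⟩
    rw [mem_closedBall_zero_iff] at hsnd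
    refine ⟨hsnd, mem_closedBall_zero_iff.2 ?_⟩
    calc ‖y‖ = √(‖y.fst‖ ^ 2 + ‖y.snd‖ ^ 2) := prod_norm_eq_of_L2 y
      _ ≤ ‖y.fst‖ + ‖y.snd‖ :=
        Real.sqrt_le_iff.2 ⟨by positivity, by nlinarith [norm_nonneg y.fst, norm_nonneg y.snd]⟩
      _ ≤ L + r := add_le_add (abs_le.2 hfst) hsnd
  refine le_of_eq_of_le ?_ (measure_mono hsub)
  rw [volume_setOf_fst_mem_and_snd_mem, Real.volume_Icc, show L - -L = 2 * L by ring]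

variable {E : Type*} [NormedAddCommGroup E] [InnerProductSpace ℝ E] [FiniteDimensional ℝ E]
  [MeasurableSpace E] [BorelSpace E]

theorem exists_isometryEquiv_preimage_line (hE : finrank ℝ E = finrank ℝ F + 1) (p : E) {v : E}
    (hv : v ≠ 0) : ∃ Θ : WithLp 2 (ℝ × F) ≃ᵢ E, MeasurePreserving Θ ∧
      Θ ⁻¹' {x | ∃ t : ℝ, x = p + t • v} = {y | y.snd = 0} := by
  have hnorm : ‖v‖ = ‖(‖v‖ • toLp 2 ((1 : ℝ), (0 : F)))‖ := by simp [norm_smul]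
  obtain ⟨L, hL⟩ :=
    exists_linearIsometryEquiv_apply_eq (hE.trans finrank_withLp_real_prod.symm) hnorm
  refine ⟨L.symm.toIsometryEquiv.trans (IsometryEquiv.addLeft p),
    (measurePreserving_add_left volume p).comp L.symm.measurePreserving, ?_⟩
  ext y
  simp only [mem_preimage, IsometryEquiv.trans_apply, IsometryEquiv.addLeft_apply,
    add_right_inj, mem_ofPred_eq, LinearIsometryEquiv.coe_toIsometryEquiv, L.symm_apply_eq,
    map_smul, hL, smul_smul]
  constructor
  · rintro ⟨t, rfl⟩
    simp
  · intro hy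
    refine ⟨y.fst / ‖v‖, ?_⟩
    rw [div_mul_cancel₀ _ (norm_ne_zero_iff.2 hv), WithLp.ext_iff]
    ext <;> simp [hy]

end ProdL2

theorem volume_closedBall_euclideanSpace {m : ℕ} {ρ : ℝ} (hρ : 0 ≤ ρ) :
    volume (closedBall (0 : EuclideanSpace ℝ (Fin m)) ρ) =
      unitBallVolume m * ENNReal.ofReal (ρ ^ m) := by
  rw [Measure.addHaar_closedBall' _ _ hρ, finrank_euclideanSpace_fin, mul_comm]
  rfl

theorem tubeMeasure_le_tsum {n : ℕ} {E : Set (EuclideanSpace ℝ (Fin n))}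
    {T : ℕ → Set (EuclideanSpace ℝ (Fin n))} {r : ℕ → ℝ} (hT : ∀ i, IsTube (T i) (r i))
    (hE : E ⊆ ⋃ i, T i) :
    tubeMeasure n E ≤ ∑' i, unitBallVolume (n - 1) * ENNReal.ofReal (r i ^ (n - 1)) :=
  iInf_le_of_le T <| iInf_le_of_le r <| iInf_le_of_le hT <| iInf_le _ hE

theorem exists_pos_tsum_ofReal_pow_le {m : ℕ} (hm : m ≠ 0) {ε : ENNReal} (hε : ε ≠ 0) :
    ∃ ρ : ℕ → ℝ, (∀ i, 0 < ρ i) ∧ ∑' i, ENNReal.ofReal (ρ i ^ m) ≤ ε := by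
  obtain ⟨δ, hδpos, hδsum⟩ := ENNReal.exists_pos_sum_of_countable hε ℕ
  refine ⟨fun i => (δ i : ℝ) ^ (m : ℝ)⁻¹, fun i => Real.rpow_pos_of_pos (hδpos i) _, ?_⟩
  simp_rw [Real.rpow_inv_natCast_pow NNReal.zero_le_coe hm, ENNReal.ofReal_coe_nnreal]
  exact hδsum.le

namespace IsTube

variable {m : ℕ} {T : Set (EuclideanSpace ℝ (Fin (m + 1)))} {r : ℝ}

theorem exists_volume_inter_closedBall_eq (hT : IsTube T r) :
    ∃ Θ : WithLp 2 (ℝ × EuclideanSpace ℝ (Fin m)) ≃ᵢ EuclideanSpace ℝ (Fin (m + 1)),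
      ∀ c R, volume (T ∩ closedBall c R) =
        volume ({y | ‖y.snd‖ ≤ r} ∩ closedBall (Θ.symm c) R) := by
  obtain ⟨hr, p, v, hv, rfl⟩ := hT
  obtain ⟨Θ, hΘ, hline⟩ :=
    exists_isometryEquiv_preimage_line (F := EuclideanSpace ℝ (Fin m)) (by simp) p hv
  refine ⟨Θ, fun c R => ?_⟩
  rw [← hΘ.measure_preimage_emb Θ.toHomeomorph.measurableEmbedding, preimage_inter,
    Θ.preimage_cthickening, hline, cthickening_setOf_snd_eq_zero hr.le, Θ.preimage_closedBall]

theorem volume_inter_closedBall_le (hT : IsTube T r) (c : EuclideanSpace ℝ (Fin (m + 1)))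
    (R : ℝ) : volume (T ∩ closedBall c R) ≤
      ENNReal.ofReal (2 * R) * (unitBallVolume m * ENNReal.ofReal (r ^ m)) := by
  obtain ⟨Θ, hΘ⟩ := hT.exists_volume_inter_closedBall_eq
  rw [hΘ, ← volume_closedBall_euclideanSpace hT.1.le]
  exact volume_setOf_norm_snd_le_inter_closedBall_le r R _

theorem exists_le_volume_inter_closedBall (hT : IsTube T r) :
    ∃ p, ∀ L : ℝ, ENNReal.ofReal (2 * L) * (unitBallVolume m * ENNReal.ofReal (r ^ m))
      ≤ volume (T ∩ closedBall p (L + r)) := by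
  obtain ⟨Θ, hΘ⟩ := hT.exists_volume_inter_closedBall_eq
  refine ⟨Θ 0, fun L => ?_⟩
  rw [hΘ, Θ.symm_apply_apply, ← volume_closedBall_euclideanSpace hT.1.le]
  exact le_volume_setOf_norm_snd_le_inter_closedBall r L

theorem le_tubeMeasure (hT : IsTube T r) :
    unitBallVolume m * ENNReal.ofReal (r ^ m) ≤ tubeMeasure (m + 1) T := by
  obtain ⟨p, hp⟩ := hT.exists_le_volume_inter_closedBall
  simp only [tubeMeasure, Nat.add_sub_cancel, le_iInf_iff]
  intro Ts rs hTs hcover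
  refine ENNReal.le_of_forall_natCast_mul_le (ENNReal.ofReal_ne_top (r := 2 * r)) fun n => ?_
  set B := closedBall p ((n : ℝ) / 2 + r)
  have hlength : ENNReal.ofReal (2 * ((n : ℝ) / 2 + r)) = n + ENNReal.ofReal (2 * r) := by
    rw [mul_add, mul_div_cancel₀ _ two_ne_zero, ENNReal.ofReal_add (by positivity)
      (by linarith [hT.1]), ENNReal.ofReal_natCast]
  calc (n : ENNReal) * (unitBallVolume m * ENNReal.ofReal (r ^ m))
      = ENNReal.ofReal (2 * ((n : ℝ) / 2)) * (unitBallVolume m * ENNReal.ofReal (r ^ m)) := by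
        rw [mul_div_cancel₀ _ two_ne_zero, ENNReal.ofReal_natCast]
    _ ≤ volume (T ∩ B) := hp _
    _ ≤ volume (⋃ i, Ts i ∩ B) := by
        rw [← iUnion_inter]
        exact measure_mono (inter_subset_inter_left B hcover)
    _ ≤ ∑' i, volume (Ts i ∩ B) := measure_iUnion_le _
    _ ≤ ∑' i, ENNReal.ofReal (2 * ((n : ℝ) / 2 + r)) *
          (unitBallVolume m * ENNReal.ofReal (rs i ^ m)) :=
        ENNReal.tsum_le_tsum fun i => (hTs i).volume_inter_closedBall_le p _
    _ = (n + ENNReal.ofReal (2 * r)) * ∑' i, unitBallVolume m * ENNReal.ofReal (rs i ^ m) := by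
        rw [ENNReal.tsum_mul_left, hlength]

theorem tubeMeasure_le (hm : m ≠ 0) (hT : IsTube T r) :
    tubeMeasure (m + 1) T ≤ unitBallVolume m * ENNReal.ofReal (r ^ m) := by
  refine ENNReal.le_of_forall_pos_le_add fun ε hε _ => ?_
  obtain ⟨hr, p, v, hv, rfl⟩ := hT
  set γ := unitBallVolume m
  have hγ : γ ≠ ⊤ := measure_closedBall_lt_top.ne
  obtain ⟨ρ, hρpos, hρsum⟩ := exists_pos_tsum_ofReal_pow_le hm
    (ENNReal.div_pos_iff.2 ⟨ENNReal.coe_ne_zero.2 hε.ne', hγ⟩).ne'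
  let rs : ℕ → ℝ := fun | 0 => r | i + 1 => ρ i
  have hrs : ∀ i, 0 < rs i := fun | 0 => hr | i + 1 => hρpos i
  calc tubeMeasure (m + 1) (cthickening r {x | ∃ t : ℝ, x = p + t • v})
      ≤ ∑' i, γ * ENNReal.ofReal (rs i ^ m) :=
        tubeMeasure_le_tsum (fun i => ⟨hrs i, p, v, hv, rfl⟩)
          (subset_iUnion (fun i => cthickening (rs i) _) 0)
    _ = γ * ENNReal.ofReal (r ^ m) + ∑' i, γ * ENNReal.ofReal (ρ i ^ m) :=
        tsum_eq_zero_add' ENNReal.summable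
    _ ≤ γ * ENNReal.ofReal (r ^ m) + γ * (ε / γ) := by
        rw [ENNReal.tsum_mul_left]
        gcongr
    _ ≤ γ * ENNReal.ofReal (r ^ m) + ε := by
        gcongr
        exact ENNReal.mul_div_le

end IsTube

/-- The tube-measure of a single tube of cross-sectional radius `r` is exactly its
cross-sectional volume `γ_{n-1} · r^{n-1}`. -/
theorem tubeMeasure_tube (n : ℕ) (hn : 2 ≤ n)
    (T : Set (EuclideanSpace ℝ (Fin n))) (r : ℝ) (hT : IsTube T r) :
    tubeMeasure n T = unitBallVolume (n - 1) * ENNReal.ofReal (r ^ (n - 1)) := by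
  obtain ⟨m, rfl⟩ : ∃ m, n = m + 1 := ⟨n - 1, by omega⟩
  rw [Nat.add_sub_cancel]
  exact le_antisymm (hT.tubeMeasure_le (by omega)) hT.le_tubeMeasure
end
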